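/- If X₁, …, X_N is a sequence of independent integer-valued random variables and n ≤ N, then D_{n,m}(ℒ(X₁ + ⋯ + X_N)) ≤ ∏_{i=1}^{n} D_{1,m}(ℒ(X_i)). -/

import Mathlib

open MeasureTheory ProbabilityTheory Filter

noncomputable section

/-- Forward difference operator with step `m`. -/
def fd (m : ℤ) (f : ℤ → ℝ) : ℤ → ℝ := fun j => f (j + m) - f j

/-- The smoothness functional `D_{n,m}` of a law `ν` on `ℤ`. -/
def Dnm (n m : ℕ) (ν : Measure ℤ) : ℝ :=
  sSup {x | ∃ g : ℤ → ℝ, (∀ i, |g i| ≤ 1) ∧ x = |∫ i, (fd m)^[n] g i ∂ν|}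

/-!
The law of a sum of independent variables is the convolution of their laws, and
`D_{n₁+n₂,m}` is submultiplicative under convolution: integrating `Δ_m^{n₁+n₂} g` against
`ν₁ ∗ ν₂` is integrating `Δ_m^{n₁} Ψ` against `ν₁`, where `Ψ x = ∫ Δ_m^{n₂} g (x + y) dν₂(y)`,
because `Δ_m` commutes with translations and with averaging over `ν₂`. Each `Ψ x` is an
integral of `Δ_m^{n₂}` of a translate of `g`, so `|Ψ| ≤ D_{n₂,m}(ν₂)`. Peeling off
`X₀, …, X_{n-1}` one at a time with `n₂ = 1`, and absorbing the rest of the sum with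
`D_{0,m} ≤ 1`, gives the bound.
-/

section ForwardDifference

variable {m : ℤ}

lemma fd_iterate_zero (n : ℕ) : (fd m)^[n] 0 = 0 :=
  Function.iterate_fixed (funext fun _ => sub_self 0) n

lemma fd_iterate_smul (c : ℝ) (f : ℤ → ℝ) (n : ℕ) :
    (fd m)^[n] (c • f) = c • (fd m)^[n] f := by
  have h : Function.Commute (fd m) (c • ·) := fun f => by
    funext j
    simp only [fd, Pi.smul_apply, smul_eq_mul, mul_sub]
  exact (h.iterate_left n) f

lemma fd_iterate_comp_add_left (f : ℤ → ℝ) (y : ℤ) (n : ℕ) :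
    (fd m)^[n] (fun j => f (y + j)) = fun j => (fd m)^[n] f (y + j) := by
  have h : Function.Commute (fd m) (fun f j => f (y + j)) := fun f => by
    funext j
    simp only [fd, add_assoc]
  exact (h.iterate_left n) f

lemma abs_fd_iterate_le {f : ℤ → ℝ} {C : ℝ} (hf : ∀ j, |f j| ≤ C) (n : ℕ) (j : ℤ) :
    |(fd m)^[n] f j| ≤ 2 ^ n * C := by
  induction n generalizing j with
  | zero => simpa using hf j
  | succ k ih =>
    rw [Function.iterate_succ_apply']
    calc |(fd m)^[k] f (j + m) - (fd m)^[k] f j|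
        ≤ |(fd m)^[k] f (j + m)| + |(fd m)^[k] f j| := abs_sub _ _
      _ ≤ 2 ^ k * C + 2 ^ k * C := add_le_add (ih _) (ih _)
      _ = 2 ^ (k + 1) * C := by ring

end ForwardDifference

section Averaging

variable {ν : Measure ℤ} [IsFiniteMeasure ν] {m : ℤ}

lemma integrable_of_abs_le {f : ℤ → ℝ} {C : ℝ} (hf : ∀ j, |f j| ≤ C) : Integrable f ν :=
  .of_bound .of_discrete C (ae_of_all _ hf)

lemma integral_fd_comp_add {h : ℤ → ℝ} {C : ℝ} (hh : ∀ j, |h j| ≤ C) (x : ℤ) :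
    ∫ y, fd m h (x + y) ∂ν = fd m (fun x => ∫ y, h (x + y) ∂ν) x := by
  simp only [fd, add_right_comm x _ m]
  exact integral_sub (integrable_of_abs_le fun _ => hh _) (integrable_of_abs_le fun _ => hh _)

lemma integral_fd_iterate_comp_add {h : ℤ → ℝ} {C : ℝ} (hh : ∀ j, |h j| ≤ C) (n : ℕ) (x : ℤ) :
    ∫ y, (fd m)^[n] h (x + y) ∂ν = (fd m)^[n] (fun x => ∫ y, h (x + y) ∂ν) x := by
  induction n generalizing h C x with
  | zero => rfl
  | succ k ih =>
    simp only [Function.iterate_succ_apply]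
    rw [ih (h := fd m h) (abs_fd_iterate_le hh 1), funext (integral_fd_comp_add hh)]

end Averaging

section Smoothness

variable {n m : ℕ} {ν : Measure ℤ}

lemma Dnm_nonneg : 0 ≤ Dnm n m ν :=
  Real.sSup_nonneg fun _ ⟨_, _, hx⟩ => hx ▸ abs_nonneg _

lemma abs_integral_fd_iterate_le_Dnm [IsFiniteMeasure ν] {g : ℤ → ℝ} (hg : ∀ i, |g i| ≤ 1) :
    |∫ i, (fd m)^[n] g i ∂ν| ≤ Dnm n m ν := by
  refine le_csSup ⟨2 ^ n * 1 * ν.real Set.univ, ?_⟩ ⟨g, hg, rfl⟩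
  rintro _ ⟨g', hg', rfl⟩
  exact norm_integral_le_of_norm_le_const
    (ae_of_all _ fun j => (Real.norm_eq_abs _).trans_le (abs_fd_iterate_le hg' n j))

lemma abs_integral_fd_iterate_le_mul_Dnm [IsFiniteMeasure ν] {g : ℤ → ℝ} {C : ℝ}
    (hg : ∀ i, |g i| ≤ C) : |∫ i, (fd m)^[n] g i ∂ν| ≤ C * Dnm n m ν := by
  rcases (abs_nonneg (g 0)).trans (hg 0) |>.eq_or_lt with rfl | hC
  · have hg0 : g = 0 := funext fun i => abs_nonpos_iff.mp (hg i)
    simp [hg0, fd_iterate_zero]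
  · have hgC : g = C • (C⁻¹ • g) := by rw [smul_inv_smul₀ hC.ne']
    have hbound : ∀ i, |(C⁻¹ • g) i| ≤ 1 := fun i => by
      rw [Pi.smul_apply, smul_eq_mul, abs_mul, abs_inv, abs_of_pos hC]
      exact inv_mul_le_one_of_le₀ (hg i) hC.le
    rw [hgC, fd_iterate_smul, Pi.smul_def]
    simp only [smul_eq_mul]
    rw [integral_const_mul, abs_mul, abs_of_pos hC]
    exact mul_le_mul_of_nonneg_left (abs_integral_fd_iterate_le_Dnm hbound) hC.le

lemma Dnm_zero_le_one [IsProbabilityMeasure ν] : Dnm 0 m ν ≤ 1 := by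
  refine Real.sSup_le ?_ zero_le_one
  rintro _ ⟨g, hg, rfl⟩
  simpa using norm_integral_le_of_norm_le_const (μ := ν)
    (ae_of_all _ fun j => (Real.norm_eq_abs _).trans_le (hg j))

theorem Dnm_conv_le (ν₁ ν₂ : Measure ℤ) [IsFiniteMeasure ν₁] [IsFiniteMeasure ν₂]
    (n₁ n₂ : ℕ) : Dnm (n₁ + n₂) m (ν₁ ∗ ν₂) ≤ Dnm n₁ m ν₁ * Dnm n₂ m ν₂ := by
  refine Real.sSup_le ?_ (mul_nonneg Dnm_nonneg Dnm_nonneg)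
  rintro _ ⟨g, hg, rfl⟩
  set Ψ : ℤ → ℝ := fun x => ∫ y, (fd m)^[n₂] g (x + y) ∂ν₂
  have hΨ : ∀ x, |Ψ x| ≤ Dnm n₂ m ν₂ := fun x => by
    have := abs_integral_fd_iterate_le_Dnm (ν := ν₂) (m := m) (n := n₂)
      (g := fun j => g (x + j)) fun _ => hg _
    rwa [fd_iterate_comp_add_left] at this
  calc |∫ i, (fd m)^[n₁ + n₂] g i ∂(ν₁ ∗ ν₂)|
      = |∫ x, (fd m)^[n₁] Ψ x ∂ν₁| := by
        rw [integral_conv (integrable_of_abs_le (abs_fd_iterate_le hg _)),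
          Function.iterate_add]
        simp only [Function.comp_apply,
          integral_fd_iterate_comp_add (abs_fd_iterate_le hg n₂), Ψ]
    _ ≤ Dnm n₂ m ν₂ * Dnm n₁ m ν₁ := abs_integral_fd_iterate_le_mul_Dnm hΨ
    _ = Dnm n₁ m ν₁ * Dnm n₂ m ν₂ := mul_comm _ _

end Smoothness

section Independent

variable {Ω : Type*} [MeasurableSpace Ω] {μ : Measure Ω}

lemma ProbabilityTheory.iIndepFun.indepFun_finsetSum_finsetSum {ι β : Type*} [AddCommMonoid β]
    [MeasurableSpace β] [MeasurableAdd₂ β] {f : ι → Ω → β} (hf : iIndepFun f μ)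
    (hf_meas : ∀ i, Measurable (f i)) {S T : Finset ι} (hST : Disjoint S T) :
    IndepFun (∑ i ∈ S, f i) (∑ i ∈ T, f i) μ := by
  have hsum : ∀ s : Finset ι, Measurable fun p : s → β => ∑ i, p i := fun s =>
    Finset.univ.measurable_sum fun i _ => measurable_pi_apply i
  convert (hf.indepFun_finset S T hST hf_meas).comp (hsum S) (hsum T) using 1 <;>
  · funext ω
    simp only [Finset.sum_apply, Function.comp_apply]
    exact (Finset.sum_coe_sort _ _).symm

lemma Dnm_map_add_le [IsFiniteMeasure μ] {X Y : Ω → ℤ} (hX : Measurable X) (hY : Measurable Y)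
    (hXY : IndepFun X Y μ) (n₁ n₂ m : ℕ) :
    Dnm (n₁ + n₂) m (μ.map (X + Y)) ≤ Dnm n₁ m (μ.map X) * Dnm n₂ m (μ.map Y) := by
  rw [hXY.map_add_eq_map_conv_map hX hY]
  exact Dnm_conv_le _ _ n₁ n₂

lemma Dnm_map_sum_range_le [IsProbabilityMeasure μ] {X : ℕ → Ω → ℤ} (hX : ∀ i, Measurable (X i))
    (hind : iIndepFun X μ) (m n : ℕ) :
    Dnm n m (μ.map (∑ i ∈ Finset.range n, X i))
      ≤ ∏ i ∈ Finset.range n, Dnm 1 m (μ.map (X i)) := by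
  induction n with
  | zero =>
    have := Measure.isProbabilityMeasure_map (μ := μ) (aemeasurable_const (b := (0 : ℤ)))
    simpa using Dnm_zero_le_one
  | succ k ih =>
    rw [Finset.sum_range_succ, Finset.prod_range_succ]
    calc Dnm (k + 1) m (μ.map (∑ i ∈ Finset.range k, X i + X k))
        ≤ Dnm k m (μ.map (∑ i ∈ Finset.range k, X i)) * Dnm 1 m (μ.map (X k)) :=
          Dnm_map_add_le (by fun_prop) (hX k)
            (hind.indepFun_finsetSum_of_notMem hX Finset.notMem_range_self) k 1 m
      _ ≤ _ := mul_le_mul_of_nonneg_right ih Dnm_nonneg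

end Independent

theorem Dnm_sum_le_prod_general
    {Ω : Type*} [MeasurableSpace Ω] (μ : Measure Ω) [IsProbabilityMeasure μ]
    (N : ℕ) (X : ℕ → Ω → ℤ) (hX : ∀ i, Measurable (X i))
    (hind : iIndepFun X μ)
    (n m : ℕ) (hnN : n ≤ N) :
    Dnm n m (μ.map (fun ω => ∑ i ∈ Finset.range N, X i ω))
      ≤ ∏ i ∈ Finset.range n, Dnm 1 m (μ.map (X i)) := by
  have hsplit : (fun ω => ∑ i ∈ Finset.range N, X i ω)
      = ∑ i ∈ Finset.range n, X i + ∑ i ∈ Finset.Ico n N, X i := by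
    rw [Finset.sum_range_add_sum_Ico _ hnN, Finset.sum_fn]
  have hTail : Measurable (∑ i ∈ Finset.Ico n N, X i) := by fun_prop
  have := Measure.isProbabilityMeasure_map (μ := μ) hTail.aemeasurable
  have hdisj : Disjoint (Finset.range n) (Finset.Ico n N) :=
    Finset.range_eq_Ico n ▸ Finset.Ico_disjoint_Ico_consecutive 0 n N
  rw [hsplit]
  calc Dnm (n + 0) m (μ.map (∑ i ∈ Finset.range n, X i + ∑ i ∈ Finset.Ico n N, X i))
      ≤ Dnm n m (μ.map (∑ i ∈ Finset.range n, X i))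
        * Dnm 0 m (μ.map (∑ i ∈ Finset.Ico n N, X i)) :=
        Dnm_map_add_le (by fun_prop) hTail
          (hind.indepFun_finsetSum_finsetSum hX hdisj) n 0 m
    _ ≤ (∏ i ∈ Finset.range n, Dnm 1 m (μ.map (X i))) * 1 :=
        mul_le_mul (Dnm_map_sum_range_le hX hind m n) (by exact Dnm_zero_le_one) Dnm_nonneg
          (Finset.prod_nonneg fun _ _ => Dnm_nonneg)
    _ = ∏ i ∈ Finset.range n, Dnm 1 m (μ.map (X i)) := mul_one _

/-- Lemma 5, second part: for independent `X₁,…,X_N` and `n ≤ N`,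
`D_{n,m}(ℒ(X₁+⋯+X_N)) ≤ ∏_{i=1}^n D_{1,m}(ℒ(X_i))`. -/
theorem Dnm_sum_le_prod
    {Ω : Type*} [MeasurableSpace Ω] (μ : Measure Ω) [IsProbabilityMeasure μ]
    (N : ℕ) (X : ℕ → Ω → ℤ) (hX : ∀ i, Measurable (X i))
    (hind : iIndepFun X μ)
    (n m : ℕ) (hn : 0 < n) (hm : 0 < m) (hnN : n ≤ N) :
    Dnm n m (μ.map (fun ω => ∑ i ∈ Finset.range N, X i ω))
      ≤ ∏ i ∈ Finset.range n, Dnm 1 m (μ.map (X i)) :=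
  Dnm_sum_le_prod_general μ N X hX hind n m hnN
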